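/- arXiv:1903.11371 — 2 statements merged into one kernel-verified Lean document; each statement's English description precedes it below -/
import Mathlib

section
/- Let ψ, ψ₁, ψ₂, … be 2-monotone Archimedean generators (non-increasing convex functions on [0,∞) with ψ(0)=1 and lim_{x→∞} ψ(x) = 0). Suppose there exist constants a_n > 0 such that ψ_n(a_n x) → ψ(x) for every x ∈ [0,∞). Then for every m ≥ 2 and every u ∈ (0,1]^m, ψ_n(Σⱼ φ_n(uⱼ)) → ψ(Σⱼ φ(uⱼ)) as n → ∞, where φ_n, φ are the generalized inverses of ψ_n, ψ respectively, provided ψ is strictly decreasing where positive. -/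
open Filter

/-- The generalized inverse `φ(u) = inf {x ≥ 0 | ψ x ≤ u}` of a 2-monotone Archimedean
generator `ψ`. -/
noncomputable def genInv (ψ : ℝ → ℝ) (u : ℝ) : ℝ :=
  sInf {x : ℝ | 0 ≤ x ∧ ψ x ≤ u}

lemma genSet_nonempty {ψ : ℝ → ℝ} {u : ℝ} (hu : 0 < u)
    (hlim : Tendsto ψ atTop (nhds 0)) :
    {x : ℝ | 0 ≤ x ∧ ψ x ≤ u}.Nonempty := by
  have h1 : ∀ᶠ x in atTop, ψ x < u := hlim.eventually (eventually_lt_nhds hu)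
  obtain ⟨x, hx0, hxu⟩ := (h1.and (eventually_ge_atTop (0:ℝ))).exists
  exact ⟨x, hxu, hx0.le⟩

lemma genSet_bddBelow {ψ : ℝ → ℝ} {u : ℝ} :
    BddBelow {x : ℝ | 0 ≤ x ∧ ψ x ≤ u} := ⟨0, fun x hx => hx.1⟩

lemma genInv_mem {ψ : ℝ → ℝ} (hcont : Continuous ψ) {u : ℝ} (hu : 0 < u)
    (hlim : Tendsto ψ atTop (nhds 0)) :
    genInv ψ u ∈ {x : ℝ | 0 ≤ x ∧ ψ x ≤ u} := by
  have hcl : IsClosed {x : ℝ | 0 ≤ x ∧ ψ x ≤ u} := by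
    have h1 : IsClosed {x : ℝ | 0 ≤ x} := isClosed_le continuous_const continuous_id
    have h2 : IsClosed {x : ℝ | ψ x ≤ u} := isClosed_le hcont continuous_const
    simpa [Set.setOf_and] using h1.inter h2
  exact hcl.csInf_mem (genSet_nonempty hu hlim) genSet_bddBelow

lemma genInv_nonneg {ψ : ℝ → ℝ} (hcont : Continuous ψ) {u : ℝ} (hu : 0 < u)
    (hlim : Tendsto ψ atTop (nhds 0)) : 0 ≤ genInv ψ u :=
  (genInv_mem hcont hu hlim).1

lemma psi_genInv {ψ : ℝ → ℝ} (hcont : Continuous ψ) (h0 : ψ 0 = 1)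
    (hlim : Tendsto ψ atTop (nhds 0)) {u : ℝ} (hu : u ∈ Set.Ioc (0:ℝ) 1) :
    ψ (genInv ψ u) = u := by
  obtain ⟨hpos, hle⟩ := genInv_mem hcont hu.1 hlim
  rcases eq_or_lt_of_le hpos with h | h
  · have : ψ (genInv ψ u) = 1 := by rw [← h, h0]
    linarith [hu.2, this ▸ hle]
  · -- genInv ψ u > 0
    refine le_antisymm hle ?_
    by_contra hlt
    push_neg at hlt
    -- ψ (genInv ψ u) < u; find x < genInv ψ u with ψ x < u
    have hc := Metric.continuous_iff.1 hcont (genInv ψ u) (u - ψ (genInv ψ u)) (by linarith)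
    obtain ⟨δ, hδ, hc⟩ := hc
    set y := genInv ψ u - min δ (genInv ψ u) / 2 with hy
    have hy0 : 0 ≤ y := by
      have : min δ (genInv ψ u) ≤ genInv ψ u := min_le_right _ _
      simp only [hy]; linarith
    have hylt : y < genInv ψ u := by
      have : 0 < min δ (genInv ψ u) := lt_min hδ h
      simp only [hy]; linarith
    have hdist : dist y (genInv ψ u) < δ := by
      have h1 : 0 < min δ (genInv ψ u) := lt_min hδ h
      have h2 : min δ (genInv ψ u) ≤ δ := min_le_left _ _
      rw [Real.dist_eq]
      simp only [hy]
      rw [abs_sub_comm, abs_of_nonneg (by linarith)]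
      linarith
    have := hc y hdist
    rw [Real.dist_eq] at this
    have hyu : ψ y ≤ u := by
      cases abs_sub_lt_iff.1 this with
      | intro h1 h2 => linarith
    exact absurd (csInf_le genSet_bddBelow ⟨hy0, hyu⟩) (not_le.2 hylt)

lemma inv_tendsto {ψ : ℝ → ℝ} {ψn : ℕ → ℝ → ℝ}
    (hcont : Continuous ψ) (hanti : AntitoneOn ψ (Set.Ici 0)) (h0 : ψ 0 = 1)
    (hlim : Tendsto ψ atTop (nhds 0))
    (hcontn : ∀ n, Continuous (ψn n)) (hantin : ∀ n, AntitoneOn (ψn n) (Set.Ici 0))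
    (hlimn : ∀ n, Tendsto (ψn n) atTop (nhds 0))
    (hstrict : ∀ x y : ℝ, 0 ≤ x → x < y → 0 < ψ x → ψ y < ψ x)
    {a : ℕ → ℝ} (ha : ∀ n, 0 < a n)
    (hscale : ∀ x : ℝ, 0 ≤ x → Tendsto (fun n => ψn n (a n * x)) atTop (nhds (ψ x)))
    {u : ℝ} (hu : u ∈ Set.Ioc (0:ℝ) 1) :
    Tendsto (fun n => genInv (ψn n) u / a n) atTop (nhds (genInv ψ u)) := by
  set t := genInv ψ u with ht
  have ht0 : 0 ≤ t := genInv_nonneg hcont hu.1 hlim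
  have hψt : ψ t = u := psi_genInv hcont h0 hlim hu
  rw [Metric.tendsto_nhds]
  intro ε hε
  -- upper bound: eventually genInv (ψn n) u ≤ a n * (t + ε/2)
  have hub : ∀ᶠ n in atTop, genInv (ψn n) u / a n ≤ t + ε / 2 := by
    have hlt : ψ (t + ε / 2) < u := by
      have := hstrict t (t + ε / 2) ht0 (by linarith) (by rw [hψt]; exact hu.1)
      linarith [hψt ▸ this]
    have := (hscale (t + ε / 2) (by linarith)).eventually (eventually_lt_nhds hlt)
    filter_upwards [this] with n hn
    have hmem : a n * (t + ε / 2) ∈ {x : ℝ | 0 ≤ x ∧ ψn n x ≤ u} :=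
      ⟨mul_nonneg (ha n).le (by linarith), hn.le⟩
    have h3 : genInv (ψn n) u ≤ a n * (t + ε / 2) := csInf_le genSet_bddBelow hmem
    rw [div_le_iff₀ (ha n)]
    linarith [h3]
  -- lower bound
  have hlb : ∀ᶠ n in atTop, t - ε / 2 ≤ genInv (ψn n) u / a n := by
    rcases eq_or_lt_of_le ht0 with h | h
    · -- t = 0
      filter_upwards with n
      have h0n : 0 ≤ genInv (ψn n) u :=
        genInv_nonneg (hcontn n) hu.1 (hlimn n)
      have : 0 ≤ genInv (ψn n) u / a n := div_nonneg h0n (ha n).le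
      rw [← h]; linarith
    · -- t > 0
      set x := t - min (ε / 2) (t / 2) with hx
      have hmin : 0 < min (ε / 2) (t / 2) := lt_min (by linarith) (by linarith)
      have hx0 : 0 ≤ x := by
        have : min (ε / 2) (t / 2) ≤ t / 2 := min_le_right _ _
        simp only [hx]; linarith
      have hxt : x < t := by simp only [hx]; linarith
      have hxε : t - ε / 2 ≤ x := by
        have : min (ε / 2) (t / 2) ≤ ε / 2 := min_le_left _ _
        simp only [hx]; linarith
      have hψx : u < ψ x := by
        have hψxpos : 0 < ψ x := by
          have := hanti (Set.mem_Ici.2 hx0) (Set.mem_Ici.2 ht0) hxt.le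
          rw [hψt] at this
          linarith [hu.1]
        have := hstrict x t hx0 hxt hψxpos
        rw [hψt] at this; exact this
      have := (hscale x hx0).eventually (eventually_gt_nhds hψx)
      filter_upwards [this] with n hn
      -- a n * x is a lower bound of the set
      have hlow : a n * x ≤ genInv (ψn n) u := by
        rw [genInv]
        apply le_csInf (genSet_nonempty hu.1 (hlimn n))
        intro y hy
        by_contra hyc
        push_neg at hyc
        have := hantin n (Set.mem_Ici.2 hy.1)
          (Set.mem_Ici.2 (mul_nonneg (ha n).le hx0)) hyc.le
        linarith [hy.2]
      rw [le_div_iff₀ (ha n)]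
      calc (t - ε / 2) * a n ≤ x * a n := by nlinarith [(ha n)]
        _ = a n * x := mul_comm _ _
        _ ≤ _ := hlow
  filter_upwards [hub, hlb] with n h1 h2
  rw [Real.dist_eq, abs_sub_lt_iff]
  constructor <;> linarith

/-- Proposition 1: if `ψ, ψ₁, ψ₂, …` are 2-monotone Archimedean generators and
`ψₙ(aₙ x) → ψ(x)` for all `x ≥ 0` with constants `aₙ > 0`, then the associated
Archimedean "copulas" converge pointwise: for every `m ≥ 2` and `u ∈ (0,1]^m`,
`ψₙ(Σⱼ φₙ(uⱼ)) → ψ(Σⱼ φ(uⱼ))`, provided `ψ` is strictly decreasing where positive. -/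
theorem stmt_11 (ψ : ℝ → ℝ) (ψn : ℕ → ℝ → ℝ)
    (hcont : Continuous ψ) (hanti : AntitoneOn ψ (Set.Ici 0))
    (hconv : ConvexOn ℝ (Set.Ici 0) ψ) (h0 : ψ 0 = 1)
    (hlim : Tendsto ψ atTop (nhds 0))
    (hcontn : ∀ n, Continuous (ψn n)) (hantin : ∀ n, AntitoneOn (ψn n) (Set.Ici 0))
    (hconvn : ∀ n, ConvexOn ℝ (Set.Ici 0) (ψn n)) (h0n : ∀ n, ψn n 0 = 1)
    (hlimn : ∀ n, Tendsto (ψn n) atTop (nhds 0))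
    (hstrict : ∀ x y : ℝ, 0 ≤ x → x < y → 0 < ψ x → ψ y < ψ x)
    (a : ℕ → ℝ) (ha : ∀ n, 0 < a n)
    (hscale : ∀ x : ℝ, 0 ≤ x → Tendsto (fun n => ψn n (a n * x)) atTop (nhds (ψ x))) :
    ∀ m : ℕ, 2 ≤ m → ∀ u : Fin m → ℝ, (∀ j, u j ∈ Set.Ioc (0:ℝ) 1) →
      Tendsto (fun n => ψn n (∑ j, genInv (ψn n) (u j))) atTop
        (nhds (ψ (∑ j, genInv ψ (u j)))) := by
  intro m _ u hu
  set s := ∑ j, genInv ψ (u j) with hs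
  have hs0 : 0 ≤ s :=
    Finset.sum_nonneg fun j _ => genInv_nonneg hcont (hu j).1 hlim
  -- scaled sums converge
  have hq : Tendsto (fun n => ∑ j, genInv (ψn n) (u j) / a n) atTop (nhds s) := by
    apply tendsto_finset_sum
    intro j _
    exact inv_tendsto hcont hanti h0 hlim hcontn hantin hlimn hstrict ha hscale (hu j)
  have hqn : ∀ n, 0 ≤ ∑ j, genInv (ψn n) (u j) / a n :=
    fun n => Finset.sum_nonneg fun j _ =>
      div_nonneg (genInv_nonneg (hcontn n) (hu j).1 (hlimn n)) (ha n).le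
  have hsum : ∀ n, (∑ j, genInv (ψn n) (u j)) = a n * ∑ j, genInv (ψn n) (u j) / a n := by
    intro n
    rw [Finset.mul_sum]
    congr 1; ext j
    rw [mul_div_cancel₀ _ (ha n).ne']
  rw [Metric.tendsto_nhds]
  intro ε hε
  -- continuity of ψ at s
  obtain ⟨δ, hδ, hδc⟩ := Metric.continuous_iff.1 hcont s (ε / 2) (by linarith)
  set xp := s + δ / 2 with hxp
  set xm := max (s - δ / 2) 0 with hxm
  have hxp0 : 0 ≤ xp := by simp only [hxp]; linarith
  have hxm0 : 0 ≤ xm := le_max_right _ _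
  have hxms : xm ≤ s := max_le (by linarith) hs0
  have hψxp : ψ s - ε / 2 < ψ xp := by
    have := hδc xp (by rw [Real.dist_eq, hxp]; rw [abs_of_nonneg (by linarith)]; linarith)
    rw [Real.dist_eq, abs_sub_lt_iff] at this
    linarith [this.1, this.2]
  have hψxm : ψ xm < ψ s + ε / 2 := by
    have hd : dist xm s < δ := by
      rw [Real.dist_eq, abs_sub_lt_iff]
      constructor
      · linarith
      · have : s - δ / 2 ≤ xm := le_max_left _ _
        linarith
    have := hδc xm hd
    rw [Real.dist_eq, abs_sub_lt_iff] at this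
    linarith [this.1, this.2]
  have h1 := (hscale xp hxp0).eventually (eventually_gt_nhds (show ψ s - ε < ψ xp by linarith))
  have h2 := (hscale xm hxm0).eventually (eventually_lt_nhds (show ψ xm < ψ s + ε by linarith))
  have h3 : ∀ᶠ n in atTop, xm ≤ ∑ j, genInv (ψn n) (u j) / a n ∧
      (∑ j, genInv (ψn n) (u j) / a n) ≤ xp := by
    have := (Metric.tendsto_nhds.1 hq) (δ / 2) (by linarith)
    filter_upwards [this] with n hn
    rw [Real.dist_eq, abs_sub_lt_iff] at hn
    refine ⟨max_le (by linarith [hn.2]) (hqn n), by simp only [hxp]; linarith [hn.1]⟩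
  filter_upwards [h1, h2, h3] with n hn1 hn2 hn3
  have hmono1 : ψn n (a n * xp) ≤ ψn n (∑ j, genInv (ψn n) (u j)) := by
    rw [hsum n]
    exact hantin n (Set.mem_Ici.2 (mul_nonneg (ha n).le (hqn n)))
      (Set.mem_Ici.2 (mul_nonneg (ha n).le hxp0))
      (mul_le_mul_of_nonneg_left hn3.2 (ha n).le)
  have hmono2 : ψn n (∑ j, genInv (ψn n) (u j)) ≤ ψn n (a n * xm) := by
    rw [hsum n]
    exact hantin n (Set.mem_Ici.2 (mul_nonneg (ha n).le hxm0))
      (Set.mem_Ici.2 (mul_nonneg (ha n).le (hqn n)))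
      (mul_le_mul_of_nonneg_left hn3.1 (ha n).le)
  rw [Real.dist_eq, abs_sub_lt_iff]
  constructor <;> linarith
end

section
/- Let K₁ and K₂ be Kendall distribution functions of two-dimensional Archimedean copulas with continuously differentiable strictly decreasing generators φ₁, φ₂ normalized by φᵢ(u₀) = 1 at some fixed u₀ ∈ (0,1), where K_{φ}(t) = t − φ(t)/φ'(t) for t ∈ (0,1). If K₁ = K₂ on (0,1), then φ₁ = φ₂ on (0,1). -/
/-!
Equality of the Kendall functions says `φ₁ / φ₁' = φ₂ / φ₂'`, i.e. the Wronskian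
`φ₁ φ₂' - φ₂ φ₁'` vanishes on `(0,1)`. Since `φ₂ > 0` there, the ratio `φ₁ / φ₂` has zero
derivative, so it is constant on the interval, and the normalization at `u₀` makes it `1`.
-/

open Set

theorem StrictAntiOn.pos_of_right_eq_zero {α β : Type*} [Preorder α] [Preorder β] [Zero β]
    {φ : α → β} {a b t : α}
    (hφ : StrictAntiOn φ (Ioc a b)) (hb : φ b = 0) (ht : t ∈ Ioo a b) : 0 < φ t :=
  hb ▸ hφ ⟨ht.1, ht.2.le⟩ ⟨ht.1.trans ht.2, le_rfl⟩ ht.2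

theorem IsOpen.eqOn_of_mul_deriv_eq {𝕜 : Type*} [RCLike 𝕜] {s : Set 𝕜} (hs : IsOpen s)
    (hs' : IsPreconnected s) {f g f' g' : 𝕜 → 𝕜}
    (hf : ∀ x ∈ s, HasDerivAt f (f' x) x) (hg : ∀ x ∈ s, HasDerivAt g (g' x) x)
    (hg₀ : ∀ x ∈ s, g x ≠ 0) (hW : ∀ x ∈ s, f x * g' x = g x * f' x)
    {x₀ : 𝕜} (hx₀ : x₀ ∈ s) (hfg : f x₀ = g x₀) : EqOn f g s := by
  have hratio : ∀ x ∈ s, HasDerivAt (f / g) 0 x := by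
    intro x hx
    have h := (hf x hx).div (hg x hx) (hg₀ x hx)
    rwa [hW x hx, mul_comm (g x), sub_self, zero_div] at h
  intro x hx
  have hconst : f x / g x = f x₀ / g x₀ :=
    hs.is_const_of_deriv_eq_zero hs'
      (fun y hy ↦ (hratio y hy).differentiableAt.differentiableWithinAt)
      (fun y hy ↦ (hratio y hy).deriv) hx hx₀
  rwa [hfg, div_self (hg₀ x₀ hx₀), div_eq_one_iff_eq (hg₀ x hx)] at hconst

theorem stmt_19_general (φ₁ φ₂ φ₁' φ₂' : ℝ → ℝ)
    (hderiv₁ : ∀ t ∈ Set.Ioo (0:ℝ) 1, HasDerivAt φ₁ (φ₁' t) t)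
    (hderiv₂ : ∀ t ∈ Set.Ioo (0:ℝ) 1, HasDerivAt φ₂ (φ₂' t) t)
    (hneg₁ : ∀ t ∈ Set.Ioo (0:ℝ) 1, φ₁' t < 0)
    (hneg₂ : ∀ t ∈ Set.Ioo (0:ℝ) 1, φ₂' t < 0)
    (hanti₂ : StrictAntiOn φ₂ (Set.Ioc 0 1))
    (hone₂ : φ₂ 1 = 0)
    (u₀ : ℝ) (hu₀ : u₀ ∈ Set.Ioo (0:ℝ) 1)
    (hnorm₁ : φ₁ u₀ = 1) (hnorm₂ : φ₂ u₀ = 1)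
    (hK : ∀ t ∈ Set.Ioo (0:ℝ) 1, t - φ₁ t / φ₁' t = t - φ₂ t / φ₂' t) :
    ∀ t ∈ Set.Ioo (0:ℝ) 1, φ₁ t = φ₂ t := by
  have hW : ∀ t ∈ Ioo (0:ℝ) 1, φ₁ t * φ₂' t = φ₂ t * φ₁' t := by
    intro t ht
    have h := sub_right_injective (hK t ht)
    rwa [div_eq_div_iff (hneg₁ t ht).ne (hneg₂ t ht).ne] at h
  exact isOpen_Ioo.eqOn_of_mul_deriv_eq isPreconnected_Ioo hderiv₁ hderiv₂
    (fun t ht ↦ (hanti₂.pos_of_right_eq_zero hone₂ ht).ne') hW hu₀ (hnorm₁.trans hnorm₂.symm)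

/-- Two-dimensional identifiability of the Archimedean model from Kendall's distribution
function: if two continuously differentiable, strictly decreasing generators `φ₁, φ₂`
(with `φᵢ(1) = 0`, `φᵢ' < 0` on `(0,1)`), normalized by `φᵢ(u₀) = 1` at some
`u₀ ∈ (0,1)`, have the same Kendall distribution function
`K_φ(t) = t - φ(t)/φ'(t)` on `(0,1)`, then `φ₁ = φ₂` on `(0,1)`. -/
theorem stmt_19 (φ₁ φ₂ φ₁' φ₂' : ℝ → ℝ)
    (hderiv₁ : ∀ t ∈ Set.Ioo (0:ℝ) 1, HasDerivAt φ₁ (φ₁' t) t)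
    (hderiv₂ : ∀ t ∈ Set.Ioo (0:ℝ) 1, HasDerivAt φ₂ (φ₂' t) t)
    (hderivCont₁ : ContinuousOn φ₁' (Set.Ioo 0 1))
    (hderivCont₂ : ContinuousOn φ₂' (Set.Ioo 0 1))
    (hneg₁ : ∀ t ∈ Set.Ioo (0:ℝ) 1, φ₁' t < 0)
    (hneg₂ : ∀ t ∈ Set.Ioo (0:ℝ) 1, φ₂' t < 0)
    (hanti₁ : StrictAntiOn φ₁ (Set.Ioc 0 1)) (hanti₂ : StrictAntiOn φ₂ (Set.Ioc 0 1))
    (hone₁ : φ₁ 1 = 0) (hone₂ : φ₂ 1 = 0)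
    (u₀ : ℝ) (hu₀ : u₀ ∈ Set.Ioo (0:ℝ) 1)
    (hnorm₁ : φ₁ u₀ = 1) (hnorm₂ : φ₂ u₀ = 1)
    (hK : ∀ t ∈ Set.Ioo (0:ℝ) 1, t - φ₁ t / φ₁' t = t - φ₂ t / φ₂' t) :
    ∀ t ∈ Set.Ioo (0:ℝ) 1, φ₁ t = φ₂ t :=
  stmt_19_general φ₁ φ₂ φ₁' φ₂' hderiv₁ hderiv₂ hneg₁ hneg₂ hanti₂ hone₂ u₀ hu₀ hnorm₁ hnorm₂ hK
end
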